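/- Let W be a general safety objective over C and M a chromatic memory structure. Then M suffices to play optimally for W in all finitely branching arenas if and only if W is M-strongly-monotone. -/

import Mathlib

set_option autoImplicit false

namespace RegularMemory

/-- Concatenation of a finite word with an infinite word. -/
def wcat {C : Type} (w : List C) (x : ℕ → C) : ℕ → C := fun n =>
  if h : n < w.length then w.get ⟨n, h⟩ else x (n - w.length)

/-- The infinite word `w^ω` (junk value if `w` is empty). -/
noncomputable def wpow {C : Type} [Nonempty C] : List C → ℕ → C
  | [] => fun _ => Classical.arbitrary C
  | (a :: l) => fun n => (a :: l).get ⟨n % (a :: l).length, Nat.mod_lt n (Nat.succ_pos _)⟩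

/-- Winning continuations `w⁻¹W` of the finite word `w` for the objective `W`. -/
def contAfter {C : Type} (W : Set (ℕ → C)) (w : List C) : Set (ℕ → C) :=
  {x | wcat w x ∈ W}

/-- Prefix preorder `w₁ ⪯_W w₂`. -/
def prefLe {C : Type} (W : Set (ℕ → C)) (w₁ w₂ : List C) : Prop :=
  contAfter W w₁ ⊆ contAfter W w₂

/-- Strict prefix relation `w₁ ≺_W w₂`. -/
def prefLt {C : Type} (W : Set (ℕ → C)) (w₁ w₂ : List C) : Prop :=
  prefLe W w₁ w₂ ∧ ¬ prefLe W w₂ w₁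

/-- Comparability for the prefix preorder. -/
def PrefComparable {C : Type} (W : Set (ℕ → C)) (w₁ w₂ : List C) : Prop :=
  prefLe W w₁ w₂ ∨ prefLe W w₂ w₁

/-- The general reachability objective derived from `A`: infinite words with a prefix in `A`. -/
def ReachObj {C : Type} (A : Set (List C)) : Set (ℕ → C) :=
  {x | ∃ n : ℕ, (List.ofFn fun i : Fin n => x i) ∈ A}

/-- The general safety objective derived from `A`. -/
def SafeObj {C : Type} (A : Set (List C)) : Set (ℕ → C) :=
  (ReachObj A)ᶜ

/-- The prefix preorder of `W` has finitely many equivalence classes. -/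
def FinClasses {C : Type} (W : Set (ℕ → C)) : Prop :=
  (Set.range fun w : List C => contAfter W w).Finite

/-- The prefix preorder of `W` is well-founded:
every nonempty chain contains a minimal element. -/
def PrefWellFounded {C : Type} (W : Set (ℕ → C)) : Prop :=
  ∀ S : Set (List C), S.Nonempty →
    (∀ w₁ ∈ S, ∀ w₂ ∈ S, PrefComparable W w₁ w₂) →
    ∃ w₀ ∈ S, ∀ w ∈ S, ¬ prefLt W w w₀

/-- Chromatic memory structure. -/
structure MemStruct (C : Type) where
  M : Type
  init : M
  upd : M → C → M

/-- Extension of the update function to finite words. -/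
def MemStruct.updStar {C : Type} (N : MemStruct C) (m : N.M) (w : List C) : N.M :=
  w.foldl N.upd m

/-- The trivial one-state memory structure. -/
def trivMem (C : Type) : MemStruct C :=
  ⟨Unit, (), fun _ _ => ()⟩

/-- `W` is `N`-strongly-monotone. -/
def StronglyMonotone {C : Type} (N : MemStruct C) (W : Set (ℕ → C)) : Prop :=
  ∀ w₁ w₂ : List C,
    N.updStar N.init w₁ = N.updStar N.init w₂ → PrefComparable W w₁ w₂

/-- `W` is `N`-progress-consistent. -/
def ProgressConsistent {C : Type} [Nonempty C] (N : MemStruct C) (W : Set (ℕ → C)) : Prop :=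
  ∀ (m : N.M) (w₁ w₂ : List C),
    N.updStar N.init w₁ = m → N.updStar m w₂ = m →
    prefLt W w₁ (w₁ ++ w₂) → wcat w₁ (wpow w₂) ∈ W

/-- Two-player arena with colored edges; Player-1 vertices have outgoing edges
(so that strategies of Player 1 exist). -/
structure Arena (C : Type) where
  V : Type
  P1 : V → Prop
  E : Set (V × C × V)
  succ : ∀ v : V, P1 v → ∃ e ∈ E, e.1 = v

namespace Arena

/-- Valid histories starting at a given vertex. -/
def HistFrom {C : Type} (A : Arena C) : A.V → List (A.V × C × A.V) → Prop
  | _, [] => True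
  | v, e :: l => e ∈ A.E ∧ e.1 = v ∧ HistFrom A e.2.2 l

/-- Endpoint of a history. -/
def endFrom {C : Type} (A : Arena C) : A.V → List (A.V × C × A.V) → A.V
  | v, [] => v
  | _, e :: l => endFrom A e.2.2 l

/-- Infinite plays from a vertex. -/
def PlayFrom {C : Type} (A : Arena C) (v : A.V) (π : ℕ → A.V × C × A.V) : Prop :=
  (π 0).1 = v ∧ ∀ n : ℕ, π n ∈ A.E ∧ (π n).2.2 = (π (n + 1)).1

/-- Colors along a play. -/
def playCol {C V : Type} (π : ℕ → V × C × V) : ℕ → C :=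
  fun n => (π n).2.1

/-- Strategies of Player 1: on every valid history ending in a Player-1 vertex,
the strategy picks an edge leaving that vertex. -/
structure Strategy {C : Type} (A : Arena C) where
  next : A.V → List (A.V × C × A.V) → A.V × C × A.V
  legal : ∀ (v : A.V) (l : List (A.V × C × A.V)),
    A.HistFrom v l → A.P1 (A.endFrom v l) →
      next v l ∈ A.E ∧ (next v l).1 = A.endFrom v l

/-- A play from `v` is consistent with the strategy `σ`. -/
def Strategy.Consistent {C : Type} {A : Arena C} (σ : A.Strategy) (v : A.V)
    (π : ℕ → A.V × C × A.V) : Prop :=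
  ∀ n : ℕ, A.P1 (A.endFrom v (List.ofFn fun i : Fin n => π i)) →
    π n = σ.next v (List.ofFn fun i : Fin n => π i)

/-- `σ` is winning from `v` for the objective `W`. -/
def Strategy.WinningFrom {C : Type} {A : Arena C} (σ : A.Strategy)
    (W : Set (ℕ → C)) (v : A.V) : Prop :=
  ∀ π : ℕ → A.V × C × A.V, A.PlayFrom v π → σ.Consistent v π → playCol π ∈ W

/-- `σ` is optimal in `(A, W)`: winning from every vertex from which
Player 1 has some winning strategy. -/
def Strategy.Optimal {C : Type} {A : Arena C} (σ : A.Strategy) (W : Set (ℕ → C)) : Prop :=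
  ∀ v : A.V, (∃ σ' : A.Strategy, σ'.WinningFrom W v) → σ.WinningFrom W v

/-- `σ` is based on the memory structure `N`. -/
def Strategy.BasedOn {C : Type} {A : Arena C} (σ : A.Strategy) (N : MemStruct C) : Prop :=
  ∃ nxt : A.V → N.M → A.V × C × A.V,
    ∀ (v : A.V) (l : List (A.V × C × A.V)),
      A.HistFrom v l → A.P1 (A.endFrom v l) →
        σ.next v l = nxt (A.endFrom v l) (N.updStar N.init (l.map fun e => e.2.1))

/-- Finite arena: finitely many vertices and edges. -/
def IsFinite {C : Type} (A : Arena C) : Prop := Finite A.V ∧ A.E.Finite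

/-- Finitely branching arena. -/
def FinBranching {C : Type} (A : Arena C) : Prop :=
  ∀ v : A.V, {e ∈ A.E | e.1 = v}.Finite

/-- One-player arena of Player 1. -/
def OneP1 {C : Type} (A : Arena C) : Prop := ∀ v : A.V, A.P1 v

end Arena

/-- `N` suffices to play optimally for `W` in all arenas of the class `P`. -/
def SufficesIn {C : Type} (N : MemStruct C) (W : Set (ℕ → C))
    (P : Arena C → Prop) : Prop :=
  ∀ A : Arena C, P A → ∃ σ : A.Strategy, σ.BasedOn N ∧ σ.Optimal W

/-- Deterministic automaton (with complete transition function). -/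
structure DetAuto (C : Type) where
  Q : Type
  init : Q
  δ : Q → C → Q
  F : Set Q

/-- Extension of the transition function to finite words. -/
def DetAuto.δStar {C : Type} (D : DetAuto C) (q : D.Q) (w : List C) : D.Q :=
  w.foldl D.δ q

/-- Language recognized by `D`. -/
def DetAuto.lang {C : Type} (D : DetAuto C) : Set (List C) :=
  {w | D.δStar D.init w ∈ D.F}

/-- Prefix preorder extended to automaton states. -/
def statePrefLe {C : Type} (D : DetAuto C) (W : Set (ℕ → C)) (q₁ q₂ : D.Q) : Prop :=
  ∀ w₁ w₂ : List C,
    D.δStar D.init w₁ = q₁ → D.δStar D.init w₂ = q₂ → prefLe W w₁ w₂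

def statePrefLt {C : Type} (D : DetAuto C) (W : Set (ℕ → C)) (q₁ q₂ : D.Q) : Prop :=
  statePrefLe D W q₁ q₂ ∧ ¬ statePrefLe D W q₂ q₁

def StateComparable {C : Type} (D : DetAuto C) (W : Set (ℕ → C)) (q₁ q₂ : D.Q) : Prop :=
  statePrefLe D W q₁ q₂ ∨ statePrefLe D W q₂ q₁

/-- Monotone decomposition of `D` with `k` sets. -/
def MonotoneDecomposition {C : Type} (D : DetAuto C) (W : Set (ℕ → C))
    {k : ℕ} (Γ : Fin k → Set D.Q) : Prop :=
  (∀ q : D.Q, ∃ i : Fin k, q ∈ Γ i) ∧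
  (∀ (c : C) (i : Fin k), ∃ j : Fin k, (fun q => D.δ q c) '' Γ i ⊆ Γ j) ∧
  (∀ i : Fin k, ∀ q₁ ∈ Γ i, ∀ q₂ ∈ Γ i, StateComparable D W q₁ q₂)

end RegularMemory

/-!
Necessity. If `w₁` and `w₂` lead to the same memory state but are incomparable, witnessed by
`x₁ ∈ w₁⁻¹W \ w₂⁻¹W` and `x₂ ∈ w₂⁻¹W \ w₁⁻¹W`, let both words lead to a single Player-1 vertex
offering the continuations `x₁` and `x₂`. A strategy based on the memory chooses the same
continuation after `w₁` and after `w₂`, so it loses from one of the two starting vertices,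
although Player 1 wins from both.

Sufficiency. At a Player-1 vertex `v` and memory state `m`, consider for each edge `e` from `v`
the histories `w` reaching `m` after which Player 1 still wins once `e` is taken. Strong
monotonicity makes these finitely many sets a chain, so some edge serves all of them: playing it
keeps every position of the play winnable for the colours read so far. For `W = Safe(A)`, a
winnable position whose colour prefix lies in `A` can only be won by forcing the play into a
Player-2 vertex without outgoing edges. On Player 1's attractor of these dead ends, whose ranks
are natural numbers by finite branching, the strategy plays attractor edges, so an infinite
consistent play never enters it; outside it, a winnable position admits a consistent infinite
play, so its colour prefix is not in `A`.
-/

namespace RegularMemory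

section Words
variable {C : Type}

theorem wcat_append (u v : List C) (x : ℕ → C) : wcat (u ++ v) x = wcat u (wcat v x) := by
  funext n
  simp only [wcat, List.length_append, List.get_eq_getElem]
  by_cases hu : n < u.length
  · simp [hu, List.getElem_append_left hu, show n < u.length + v.length by omega]
  · by_cases hv : n < u.length + v.length
    · simp [hu, hv, List.getElem_append_right (Nat.le_of_not_lt hu),
        show n - u.length < v.length by omega]
    · simp [hu, hv, show ¬ n - u.length < v.length by omega, Nat.sub_add_eq]

theorem wcat_nil (x : ℕ → C) : wcat [] x = x := by
  funext n
  simp [wcat]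

theorem contAfter_nil (W : Set (ℕ → C)) : contAfter W [] = W := by
  ext x
  simp [contAfter, wcat_nil]

theorem ofFn_wcat (w : List C) (x : ℕ → C) :
    (List.ofFn fun i : Fin w.length => wcat w x i) = w := by
  simp [wcat]

theorem contAfter_append (W : Set (ℕ → C)) (u v : List C) :
    contAfter W (u ++ v) = contAfter (contAfter W u) v := by
  ext x
  simp only [contAfter, Set.mem_ofPred_eq, wcat_append]

theorem contAfter_mono {W W' : Set (ℕ → C)} (h : W ⊆ W') (w : List C) :
    contAfter W w ⊆ contAfter W' w :=
  fun _ hx => h hx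

theorem prefLe_append_right {W : Set (ℕ → C)} {w w' : List C} (h : prefLe W w w')
    (u : List C) : prefLe W (w ++ u) (w' ++ u) := by
  simpa only [prefLe, contAfter_append] using contAfter_mono h u

theorem not_mem_of_contAfter_safeObj_nonempty {A : Set (List C)} {w : List C}
    (h : (contAfter (SafeObj A) w).Nonempty) : w ∉ A := by
  obtain ⟨x, hx⟩ := h
  exact fun hw => hx ⟨w.length, by rwa [ofFn_wcat]⟩

theorem ofFn_succ_eq_append {α : Type} (f : ℕ → α) (n : ℕ) :
    (List.ofFn fun i : Fin (n + 1) => f i) = (List.ofFn fun i : Fin n => f i) ++ [f n] := by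
  rw [List.ofFn_succ']
  simp [Fin.last]

end Words

namespace Arena

variable {C : Type} {A : Arena C}

theorem endFrom_append (v : A.V) (l : List (A.V × C × A.V)) (e : A.V × C × A.V) :
    A.endFrom v (l ++ [e]) = e.2.2 := by
  induction l generalizing v with
  | nil => rfl
  | cons f l ih => exact ih f.2.2

theorem HistFrom.append {v : A.V} {l : List (A.V × C × A.V)} {e : A.V × C × A.V}
    (hl : A.HistFrom v l) (he : e ∈ A.E) (hsrc : e.1 = A.endFrom v l) :
    A.HistFrom v (l ++ [e]) := by
  induction l generalizing v with
  | nil => exact ⟨he, hsrc, trivial⟩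
  | cons f l ih => exact ⟨hl.1, hl.2.1, ih hl.2.2 hsrc⟩

theorem PlayFrom.endFrom_ofFn {v : A.V} {π : ℕ → A.V × C × A.V} (hπ : A.PlayFrom v π)
    (n : ℕ) : A.endFrom v (List.ofFn fun i : Fin n => π i) = (π n).1 := by
  induction n with
  | zero => exact hπ.1.symm
  | succ n ih => rw [ofFn_succ_eq_append, endFrom_append, (hπ.2 n).2]

theorem PlayFrom.histFrom_ofFn {v : A.V} {π : ℕ → A.V × C × A.V} (hπ : A.PlayFrom v π)
    (n : ℕ) : A.HistFrom v (List.ofFn fun i : Fin n => π i) := by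
  induction n with
  | zero => trivial
  | succ n ih => rw [ofFn_succ_eq_append]; exact ih.append (hπ.2 n).1 (hπ.endFrom_ofFn n).symm

theorem colors_ofFn (π : ℕ → A.V × C × A.V) (n : ℕ) :
    (List.ofFn fun i : Fin n => π i).map (fun e => e.2.1) =
      List.ofFn fun i : Fin n => playCol π i := by
  rw [List.map_ofFn]; rfl

theorem Strategy.consistent_iff {σ : A.Strategy} {v : A.V} {π : ℕ → A.V × C × A.V}
    (hπ : A.PlayFrom v π) :
    σ.Consistent v π ↔
      ∀ n, A.P1 (π n).1 → π n = σ.next v (List.ofFn fun i : Fin n => π i) := by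
  simp only [Strategy.Consistent, hπ.endFrom_ofFn]

def Strategy.BasedOnMoves (σ : A.Strategy) (N : MemStruct C) (nxt : A.V → N.M → A.V × C × A.V) :
    Prop :=
  ∀ (v : A.V) (l : List (A.V × C × A.V)), A.HistFrom v l → A.P1 (A.endFrom v l) →
    σ.next v l = nxt (A.endFrom v l) (N.updStar N.init (l.map fun e => e.2.1))

theorem Strategy.next_ofFn_of_basedOn {N : MemStruct C} {σ : A.Strategy}
    {nxt : A.V → N.M → A.V × C × A.V}
    (hσ : σ.BasedOnMoves N nxt)
    {v : A.V} {π : ℕ → A.V × C × A.V} (hπ : A.PlayFrom v π) {n : ℕ} (h1 : A.P1 (π n).1) :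
    σ.next v (List.ofFn fun i : Fin n => π i) =
      nxt (π n).1 (N.updStar N.init (List.ofFn fun i : Fin n => playCol π i)) := by
  rw [hσ v _ (hπ.histFrom_ofFn n) (by rwa [hπ.endFrom_ofFn]), hπ.endFrom_ofFn, colors_ofFn]

def Winnable (A : Arena C) (W : Set (ℕ → C)) (v : A.V) : Prop :=
  ∃ σ : A.Strategy, σ.WinningFrom W v

theorem Winnable.mono {W W' : Set (ℕ → C)} {v : A.V} (h : W ⊆ W') :
    A.Winnable W v → A.Winnable W' v :=
  fun ⟨σ, hσ⟩ => ⟨σ, fun π hπ hc => h (hσ π hπ hc)⟩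

theorem Strategy.WinningFrom.winnable_of_edge {W : Set (ℕ → C)} {v : A.V} {σ : A.Strategy}
    (hσ : σ.WinningFrom W v) {e : A.V × C × A.V} (he : e ∈ A.E) (hsrc : e.1 = v)
    (hnext : A.P1 v → σ.next v [] = e) :
    A.Winnable (contAfter W [e.2.1]) e.2.2 := by
  classical
  refine ⟨⟨fun u l => if u = e.2.2 then σ.next v (e :: l) else σ.next u l,
    fun u l hl h1 => ?_⟩, fun π hπ hcons => ?_⟩
  · split_ifs with hu
    · subst hu; exact σ.legal v (e :: l) ⟨he, hsrc, hl⟩ h1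
    · exact σ.legal u l hl h1
  · let π' : ℕ → A.V × C × A.V := fun n => Nat.casesOn n e π
    have hplay : A.PlayFrom v π' := ⟨hsrc, fun n => by cases n; exacts [⟨he, hπ.1.symm⟩, hπ.2 _]⟩
    have hcons' : σ.Consistent v π' := by
      rintro (_ | n) h1
      · exact (hnext h1).symm
      · rw [List.ofFn_succ] at h1 ⊢
        exact ((hcons n h1).trans (if_pos rfl) :)
    have hcol : playCol π' = wcat [e.2.1] (playCol π) := by
      funext n; cases n <;> rfl
    show wcat [e.2.1] (playCol π) ∈ W
    exact hcol ▸ hσ π' hplay hcons'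

/-- Player 1's attractor, up to rank `n`, of the Player-2 vertices without outgoing edges. -/
def ForcesDeadEndWithin (A : Arena C) : ℕ → A.V → Prop
  | 0, _ => False
  | n + 1, v => (¬ A.P1 v ∧ ∀ e ∈ A.E, e.1 = v → A.ForcesDeadEndWithin n e.2.2) ∨
      (A.P1 v ∧ ∃ e ∈ A.E, e.1 = v ∧ A.ForcesDeadEndWithin n e.2.2)

def ForcesDeadEnd (A : Arena C) (v : A.V) : Prop :=
  ∃ n, A.ForcesDeadEndWithin n v

def LowersDeadEndRank (A : Arena C) (v : A.V) (e : A.V × C × A.V) : Prop :=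
  ∀ n, A.ForcesDeadEndWithin (n + 1) v → A.ForcesDeadEndWithin n e.2.2

theorem ForcesDeadEndWithin.mono {n m : ℕ} {v : A.V} (h : A.ForcesDeadEndWithin n v)
    (hnm : n ≤ m) : A.ForcesDeadEndWithin m v := by
  induction n generalizing m v with
  | zero => exact h.elim
  | succ n ih =>
    obtain ⟨m, rfl⟩ : ∃ m', m = m' + 1 := ⟨m - 1, by omega⟩
    rcases h with ⟨h1, hall⟩ | ⟨h1, e, he, hsrc, hn⟩
    · exact Or.inl ⟨h1, fun e he hsrc => ih (hall e he hsrc) (by omega)⟩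
    · exact Or.inr ⟨h1, e, he, hsrc, ih hn (by omega)⟩

/-- Finite branching bounds the ranks of the successors of a Player-2 vertex. -/
theorem forcesDeadEnd_of_forall_edge (hfb : A.FinBranching) {v : A.V} (h1 : ¬ A.P1 v)
    (h : ∀ e ∈ A.E, e.1 = v → A.ForcesDeadEnd e.2.2) : A.ForcesDeadEnd v := by
  classical
  have : Finite {e ∈ A.E | e.1 = v} := (hfb v).to_subtype
  let rank : {e ∈ A.E | e.1 = v} → ℕ := fun e => Nat.find (h e.1 e.2.1 e.2.2)
  obtain ⟨B, hB⟩ := (Set.finite_range rank).bddAbove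
  refine ⟨B + 1, Or.inl ⟨h1, fun e he hsrc => ?_⟩⟩
  exact (Nat.find_spec (h e he hsrc)).mono (hB ⟨⟨e, he, hsrc⟩, rfl⟩)

theorem exists_edge_lowersDeadEndRank {v : A.V} (h1 : A.P1 v) (hv : A.ForcesDeadEnd v) :
    ∃ e ∈ A.E, e.1 = v ∧ A.LowersDeadEndRank v e := by
  classical
  obtain ⟨s, hs⟩ : ∃ s, Nat.find hv = s + 1 :=
    Nat.exists_eq_succ_of_ne_zero fun h0 => by
      simpa [h0, ForcesDeadEndWithin] using Nat.find_spec hv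
  have hspec := Nat.find_spec hv
  rw [hs] at hspec
  rcases hspec with ⟨hn1, -⟩ | ⟨-, e, he, hsrc, hes⟩
  · exact absurd h1 hn1
  · exact ⟨e, he, hsrc, fun n hn => hes.mono (by have := Nat.find_min' hv hn; omega)⟩

theorem PlayFrom.not_forcesDeadEndWithin {v : A.V} {π : ℕ → A.V × C × A.V}
    (hπ : A.PlayFrom v π)
    (hattr : ∀ k, A.P1 (π k).1 → A.LowersDeadEndRank (π k).1 (π k)) :
    ∀ n k, ¬ A.ForcesDeadEndWithin n (π k).1 := by
  intro n
  induction n with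
  | zero => exact fun _ h => h
  | succ n ih =>
    intro k h
    apply ih (k + 1)
    rw [← (hπ.2 k).2]
    rcases h with ⟨-, hall⟩ | ⟨h1, hex⟩
    · exact hall _ (hπ.2 k).1 rfl
    · exact hattr k h1 n (Or.inr ⟨h1, hex⟩)

theorem exists_play_of_step (σ : A.Strategy) (v : A.V) (G : List (A.V × C × A.V) → Prop)
    (h0 : G [])
    (hstep : ∀ l, G l → ∃ e ∈ A.E, e.1 = A.endFrom v l ∧ G (l ++ [e]) ∧
      (A.P1 (A.endFrom v l) → e = σ.next v l)) :
    ∃ π, A.PlayFrom v π ∧ σ.Consistent v π := by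
  choose pick hpickE hpickSrc hpickG hpickNext using hstep
  let H : ℕ → {l // G l} := fun n =>
    Nat.rec ⟨[], h0⟩ (fun _ l => ⟨l.1 ++ [pick l.1 l.2], hpickG l.1 l.2⟩) n
  let π : ℕ → A.V × C × A.V := fun n => pick (H n).1 (H n).2
  have hH : ∀ n, (List.ofFn fun i : Fin n => π i) = (H n).1 := by
    intro n
    induction n with
    | zero => rfl
    | succ n ih => rw [ofFn_succ_eq_append, ih]
  refine ⟨π, ⟨hpickSrc [] h0, fun n => ⟨hpickE _ _, ?_⟩⟩, fun n h1 => ?_⟩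
  · rw [hpickSrc (H (n + 1)).1 (H (n + 1)).2]
    exact (endFrom_append v _ _).symm
  · rw [hH] at h1 ⊢
    exact hpickNext _ _ h1

theorem exists_consistent_play (hfb : A.FinBranching) (σ : A.Strategy) {v : A.V}
    (hv : ¬ A.ForcesDeadEnd v) : ∃ π, A.PlayFrom v π ∧ σ.Consistent v π := by
  refine exists_play_of_step σ v (fun l => A.HistFrom v l ∧ ¬ A.ForcesDeadEnd (A.endFrom v l))
    ⟨trivial, hv⟩ fun l ⟨hl, hlv⟩ => ?_
  have key : ∃ e ∈ A.E, e.1 = A.endFrom v l ∧ ¬ A.ForcesDeadEnd e.2.2 ∧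
      (A.P1 (A.endFrom v l) → e = σ.next v l) := by
    by_cases h1 : A.P1 (A.endFrom v l)
    · obtain ⟨he, hsrc⟩ := σ.legal v l hl h1
      refine ⟨σ.next v l, he, hsrc, fun ⟨n, hn⟩ => hlv ⟨n + 1, Or.inr ⟨h1, _, he, hsrc, hn⟩⟩,
        fun _ => rfl⟩
    · obtain ⟨e, he, hsrc, hne⟩ : ∃ e ∈ A.E, e.1 = A.endFrom v l ∧ ¬ A.ForcesDeadEnd e.2.2 := by
        by_contra! hall
        exact hlv (forcesDeadEnd_of_forall_edge hfb h1 hall)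
      exact ⟨e, he, hsrc, hne, fun h => absurd h h1⟩
  obtain ⟨e, he, hsrc, hne, hnext⟩ := key
  exact ⟨e, he, hsrc, ⟨hl.append he hsrc, by rwa [endFrom_append]⟩, hnext⟩

theorem Winnable.nonempty (hfb : A.FinBranching) {W : Set (ℕ → C)} {v : A.V}
    (hv : ¬ A.ForcesDeadEnd v) (h : A.Winnable W v) : W.Nonempty := by
  obtain ⟨σ, hσ⟩ := h
  obtain ⟨π, hπ, hcons⟩ := exists_consistent_play hfb σ hv
  exact ⟨_, hσ π hπ hcons⟩

def KeepsWinnable (A : Arena C) (N : MemStruct C) (W : Set (ℕ → C)) (m : N.M) (v : A.V)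
    (e : A.V × C × A.V) : Prop :=
  ∀ w : List C, N.updStar N.init w = m →
    A.Winnable (contAfter W w) v → A.Winnable (contAfter W (w ++ [e.2.1])) e.2.2

def PlayFollows (A : Arena C) (N : MemStruct C) (nxt : A.V → N.M → A.V × C × A.V)
    (π : ℕ → A.V × C × A.V) : Prop :=
  ∀ n, A.P1 (π n).1 → π n = nxt (π n).1 (N.updStar N.init (List.ofFn fun i : Fin n => playCol π i))

section Memory

variable {N : MemStruct C} {nxt : A.V → N.M → A.V × C × A.V} {v : A.V}
  {π : ℕ → A.V × C × A.V}

theorem Strategy.Consistent.playFollows {σ : A.Strategy} (hσ : σ.BasedOnMoves N nxt)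
    (hπ : A.PlayFrom v π) (hcons : σ.Consistent v π) : A.PlayFollows N nxt π :=
  fun n h1 => ((Strategy.consistent_iff hπ).1 hcons n h1).trans
    (Strategy.next_ofFn_of_basedOn hσ hπ h1)

theorem PlayFollows.not_forcesDeadEnd (hπ : A.PlayFrom v π) (hf : A.PlayFollows N nxt π)
    (hattr : ∀ v m, A.P1 v → A.LowersDeadEndRank v (nxt v m)) (n : ℕ) :
    ¬ A.ForcesDeadEnd (π n).1 := by
  refine fun ⟨k, hk⟩ => hπ.not_forcesDeadEndWithin (fun k h1 => ?_) k n hk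
  have := hattr _ (N.updStar N.init (List.ofFn fun i : Fin k => playCol π i)) h1
  rwa [← hf k h1] at this

theorem PlayFollows.winnable {W : Set (ℕ → C)} (hπ : A.PlayFrom v π)
    (hf : A.PlayFollows N nxt π)
    (hgood : ∀ v m, A.P1 v → ¬ A.ForcesDeadEnd v → A.KeepsWinnable N W m v (nxt v m))
    (hsafe : ∀ n, ¬ A.ForcesDeadEnd (π n).1) (hv : A.Winnable W v) (n : ℕ) :
    A.Winnable (contAfter W (List.ofFn fun i : Fin n => playCol π i)) (π n).1 := by
  induction n with
  | zero => simpa [contAfter_nil, hπ.1] using hv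
  | succ n ih =>
    rw [ofFn_succ_eq_append, ← (hπ.2 n).2]
    by_cases h1 : A.P1 (π n).1
    · have := hgood _ _ h1 (hsafe n) _ rfl ih
      rwa [← hf n h1] at this
    · obtain ⟨τ, hτ⟩ := ih
      rw [contAfter_append]
      exact hτ.winnable_of_edge (hπ.2 n).1 rfl (absurd · h1)

end Memory

end Arena

open Arena

section Sufficiency

variable {C : Type} {A : Arena C} {W : Set (ℕ → C)} {N : MemStruct C}

theorem exists_edge_keepsWinnable (hW : StronglyMonotone N W) {v : A.V}
    (hfin : {e ∈ A.E | e.1 = v}.Finite) (h1 : A.P1 v) (m : N.M) :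
    ∃ e ∈ A.E, e.1 = v ∧ A.KeepsWinnable N W m v e := by
  let U : A.V × C × A.V → Set (List C) := fun e =>
    {w | N.updStar N.init w = m ∧ A.Winnable (contAfter W (w ++ [e.2.1])) e.2.2}
  have hcover : ∀ w, N.updStar N.init w = m → A.Winnable (contAfter W w) v →
      ∃ e ∈ {e ∈ A.E | e.1 = v}, w ∈ U e := by
    rintro w hm ⟨σ, hσ⟩
    obtain ⟨he, hsrc⟩ := σ.legal v [] trivial h1
    refine ⟨σ.next v [], ⟨he, hsrc⟩, hm, ?_⟩
    rw [contAfter_append]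
    exact hσ.winnable_of_edge he hsrc fun _ => rfl
  have hchain : ∀ e₁ e₂, U e₁ ⊆ U e₂ ∨ U e₂ ⊆ U e₁ := by
    intro e₁ e₂
    by_contra! h
    obtain ⟨w₁, hw₁, hw₁'⟩ := Set.not_subset.1 h.1
    obtain ⟨w₂, hw₂, hw₂'⟩ := Set.not_subset.1 h.2
    rcases hW w₁ w₂ (hw₁.1.trans hw₂.1.symm) with h12 | h21
    · exact hw₂' ⟨hw₂.1, hw₁.2.mono (prefLe_append_right h12 _)⟩
    · exact hw₁' ⟨hw₁.1, hw₂.2.mono (prefLe_append_right h21 _)⟩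
  obtain ⟨e, he, hmax⟩ := hfin.exists_maximalFor U _ (A.succ v h1)
  refine ⟨e, he.1, he.2, fun w hm hw => ?_⟩
  obtain ⟨e', he', hw'⟩ := hcover w hm hw
  rcases hchain e' e with h | h
  · exact (h hw').2
  · exact (hmax he' h hw').2

theorem exists_memoryMoves [Nonempty C] (hfb : A.FinBranching) (hW : StronglyMonotone N W) :
    ∃ nxt : A.V → N.M → A.V × C × A.V, ∀ v m, A.P1 v →
      nxt v m ∈ A.E ∧ (nxt v m).1 = v ∧ A.LowersDeadEndRank v (nxt v m) ∧
      (¬ A.ForcesDeadEnd v → A.KeepsWinnable N W m v (nxt v m)) := by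
  have hmove : ∀ v m, ∃ e : A.V × C × A.V, A.P1 v → e ∈ A.E ∧ e.1 = v ∧
      A.LowersDeadEndRank v e ∧ (¬ A.ForcesDeadEnd v → A.KeepsWinnable N W m v e) := by
    intro v m
    by_cases h1 : A.P1 v
    · by_cases hv : A.ForcesDeadEnd v
      · obtain ⟨e, he, hsrc, hdown⟩ := exists_edge_lowersDeadEndRank h1 hv
        exact ⟨e, fun _ => ⟨he, hsrc, hdown, absurd hv⟩⟩
      · obtain ⟨e, he, hsrc, hgood⟩ := exists_edge_keepsWinnable hW (hfb v) h1 m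
        exact ⟨e, fun _ => ⟨he, hsrc, fun n hn => absurd ⟨n + 1, hn⟩ hv, fun _ => hgood⟩⟩
    · exact ⟨(v, Classical.arbitrary C, v), fun h => absurd h h1⟩
  choose nxt hnxt using hmove
  exact ⟨nxt, hnxt⟩

theorem sufficesIn_finBranching_of_stronglyMonotone [Nonempty C] {B : Set (List C)}
    (hW : StronglyMonotone N (SafeObj B)) : SufficesIn N (SafeObj B) (fun A => A.FinBranching) := by
  intro A hfb
  obtain ⟨nxt, hnxt⟩ := exists_memoryMoves hfb hW
  let σ : A.Strategy :=
    ⟨fun v l => nxt (A.endFrom v l) (N.updStar N.init (l.map fun e => e.2.1)),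
      fun _ _ _ h1 => ⟨(hnxt _ _ h1).1, (hnxt _ _ h1).2.1⟩⟩
  refine ⟨σ, ⟨nxt, fun _ _ _ _ => rfl⟩, fun v hv π hπ hcons => ?_⟩
  have hf : A.PlayFollows N nxt π := hcons.playFollows (fun _ _ _ _ => rfl) hπ
  have hsafe := hf.not_forcesDeadEnd hπ fun v m h1 => (hnxt v m h1).2.2.1
  have hwin := hf.winnable hπ (fun v m h1 => (hnxt v m h1).2.2.2) hsafe hv
  rintro ⟨n, hn⟩
  exact not_mem_of_contAfter_safeObj_nonempty ((hwin n).nonempty hfb (hsafe n)) hn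

end Sufficiency

section Gadget

variable {C : Type} (x : Bool → ℕ → C)

/-- Reading the word `l` from `.inl l` leads to the only Player-1 vertex `.inl []`, where
Player 1 chooses which of the two infinite words `x j` is read next, along vertices `.inr y`. -/
def gadgetEdges : Set ((List C ⊕ (ℕ → C)) × C × (List C ⊕ (ℕ → C))) :=
  {e | (∃ c l, e = (.inl (c :: l), c, .inl l)) ∨
    (∃ j, e = (.inl [], x j 0, .inr fun k => x j (k + 1))) ∨
    (∃ y : ℕ → C, e = (.inr y, y 0, .inr fun k => y (k + 1)))}

def choiceEdge (j : Bool) : (List C ⊕ (ℕ → C)) × C × (List C ⊕ (ℕ → C)) :=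
  (.inl [], x j 0, .inr fun k => x j (k + 1))

abbrev gadget : Arena C where
  V := List C ⊕ (ℕ → C)
  P1 v := v = .inl []
  E := gadgetEdges x
  succ _ hv := ⟨choiceEdge x true, Or.inr (Or.inl ⟨true, rfl⟩), hv.symm⟩

variable {x}

theorem gadgetEdges_eq_of_fst_eq {e e' : (List C ⊕ (ℕ → C)) × C × (List C ⊕ (ℕ → C))}
    (he : e ∈ gadgetEdges x) (he' : e' ∈ gadgetEdges x) (hsrc : e.1 = e'.1)
    (hu : e.1 ≠ .inl []) : e = e' := by
  rcases he with ⟨c, l, rfl⟩ | ⟨j, rfl⟩ | ⟨y, rfl⟩ <;>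
    rcases he' with ⟨c', l', rfl⟩ | ⟨j', rfl⟩ | ⟨y', rfl⟩ <;> simp_all

theorem eq_choiceEdge_of_fst_eq {e : (List C ⊕ (ℕ → C)) × C × (List C ⊕ (ℕ → C))}
    (he : e ∈ gadgetEdges x) (hsrc : e.1 = .inl []) : ∃ j, e = choiceEdge x j := by
  rcases he with ⟨c, l, rfl⟩ | ⟨j, rfl⟩ | ⟨y, rfl⟩
  · simp at hsrc
  · exact ⟨j, rfl⟩
  · simp at hsrc

theorem gadget_finBranching : (gadget x).FinBranching := by
  intro v
  by_cases hu : v = .inl []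
  · refine (Set.finite_range (choiceEdge x)).subset fun e ⟨he, hsrc⟩ => ?_
    obtain ⟨j, rfl⟩ := eq_choiceEdge_of_fst_eq he (hsrc.trans hu)
    exact ⟨j, rfl⟩
  · refine Set.Subsingleton.finite fun e ⟨he, hsrc⟩ e' ⟨he', hsrc'⟩ => ?_
    exact gadgetEdges_eq_of_fst_eq he he' (hsrc.trans hsrc'.symm) (hsrc ▸ hu)

def gadgetVertex (w : List C) (y : ℕ → C) (n : ℕ) : List C ⊕ (ℕ → C) :=
  if n ≤ w.length then .inl (w.drop n) else .inr fun k => y (n - w.length + k)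

variable (x) in
def gadgetPlay (w : List C) (j : Bool) (n : ℕ) : (gadget x).V × C × (gadget x).V :=
  (gadgetVertex w (x j) n, wcat w (x j) n, gadgetVertex w (x j) (n + 1))

theorem gadgetVertex_eq_inl_nil_iff {w : List C} {y : ℕ → C} {n : ℕ} :
    gadgetVertex w y n = .inl [] ↔ n = w.length := by
  unfold gadgetVertex
  split_ifs with h <;> simp <;> omega

theorem gadgetPlay_length (w : List C) (j : Bool) :
    gadgetPlay x w j w.length = choiceEdge x j := by
  simp [gadgetPlay, gadgetVertex, choiceEdge, wcat, Nat.add_comm]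

theorem gadgetPlay_mem (w : List C) (j : Bool) (n : ℕ) :
    gadgetPlay x w j n ∈ gadgetEdges x := by
  rcases Nat.lt_trichotomy n w.length with h | rfl | h
  · refine Or.inl ⟨w[n], w.drop (n + 1), ?_⟩
    simp only [gadgetPlay, gadgetVertex, wcat, if_pos (Nat.le_of_lt h),
      if_pos (Nat.succ_le_of_lt h), dif_pos h, List.get_eq_getElem]
    rw [List.drop_eq_getElem_cons h]
  · exact gadgetPlay_length w j ▸ Or.inr (Or.inl ⟨j, rfl⟩)
  · refine Or.inr (Or.inr ⟨fun k => x j (n - w.length + k), ?_⟩)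
    simp only [gadgetPlay, gadgetVertex, wcat, if_neg (show ¬ n ≤ w.length by omega),
      if_neg (show ¬ n + 1 ≤ w.length by omega), dif_neg (show ¬ n < w.length by omega),
      Nat.add_zero, Prod.mk.injEq, Sum.inr.injEq, true_and]
    funext k
    congr 1
    omega

theorem gadgetPlay_playFrom (w : List C) (j : Bool) :
    (gadget x).PlayFrom (.inl w) (gadgetPlay x w j) :=
  ⟨by simp [gadgetPlay, gadgetVertex], fun n => ⟨gadgetPlay_mem w j n, rfl⟩⟩

theorem eq_gadgetPlay {w : List C} {j : Bool} {π : ℕ → (gadget x).V × C × (gadget x).V}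
    (hπ : (gadget x).PlayFrom (.inl w) π) (hchoice : ∀ n, (π n).1 = .inl [] → π n = choiceEdge x j)
    (n : ℕ) : π n = gadgetPlay x w j n := by
  have key : ∀ n, (π n).1 = gadgetVertex w (x j) n → π n = gadgetPlay x w j n := by
    intro n hsrc
    by_cases hu : n = w.length
    · subst hu
      exact (hchoice _ (hsrc.trans (gadgetVertex_eq_inl_nil_iff.2 rfl))).trans
        (gadgetPlay_length w j).symm
    · exact gadgetEdges_eq_of_fst_eq (hπ.2 n).1 (gadgetPlay_mem w j n) hsrc
        (hsrc ▸ mt gadgetVertex_eq_inl_nil_iff.1 hu)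
  refine key n ?_
  induction n with
  | zero => simpa [gadgetVertex] using hπ.1
  | succ n ih => rw [← (hπ.2 n).2, key n ih]; rfl

theorem gadget_winnable (w : List C) (j : Bool) {W : Set (ℕ → C)} (hW : wcat w (x j) ∈ W) :
    (gadget x).Winnable W (.inl w) := by
  refine ⟨⟨fun _ _ => choiceEdge x j, fun _ _ _ hu => ⟨Or.inr (Or.inl ⟨j, rfl⟩), hu.symm⟩⟩,
    fun π hπ hcons => ?_⟩
  have hπ' := eq_gadgetPlay hπ ((Strategy.consistent_iff hπ).1 hcons)
  rwa [show playCol π = wcat w (x j) from funext fun n => by rw [playCol, hπ' n]; rfl]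

theorem gadget_consistent_of_basedOn {N : MemStruct C} {σ : (gadget x).Strategy}
    {nxt : (gadget x).V → N.M → (gadget x).V × C × (gadget x).V} (hσ : σ.BasedOnMoves N nxt)
    {w : List C} {j : Bool} (hj : nxt (.inl []) (N.updStar N.init w) = choiceEdge x j) :
    σ.Consistent (.inl w) (gadgetPlay x w j) := by
  refine (Strategy.consistent_iff (gadgetPlay_playFrom w j)).2 fun n h1 => ?_
  obtain rfl := gadgetVertex_eq_inl_nil_iff.1 h1
  rw [Strategy.next_ofFn_of_basedOn hσ (gadgetPlay_playFrom w j) h1]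
  have hcol : (List.ofFn fun i : Fin w.length => playCol (gadgetPlay x w j) i) = w :=
    ofFn_wcat w (x j)
  rw [hcol, gadgetPlay_length]
  exact hj.symm

theorem exists_choiceEdge_of_basedOn {N : MemStruct C} {σ : (gadget x).Strategy}
    {nxt : (gadget x).V → N.M → (gadget x).V × C × (gadget x).V} (hσ : σ.BasedOnMoves N nxt)
    (w : List C) : ∃ j, nxt (.inl []) (N.updStar N.init w) = choiceEdge x j := by
  have hπ := gadgetPlay_playFrom (x := x) w true
  let l := List.ofFn fun i : Fin w.length => gadgetPlay x w true i
  have hl : (gadget x).HistFrom (.inl w) l := hπ.histFrom_ofFn _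
  have hend : (gadget x).endFrom (.inl w) l = .inl [] :=
    (hπ.endFrom_ofFn _).trans (gadgetVertex_eq_inl_nil_iff.2 rfl)
  have hcol : l.map (fun e => e.2.1) = w := (colors_ofFn _ _).trans (ofFn_wcat w (x true))
  obtain ⟨he, hsrc⟩ := σ.legal _ l hl hend
  rw [hσ _ l hl hend, hend, hcol] at he hsrc
  exact eq_choiceEdge_of_fst_eq he hsrc

end Gadget

section Necessity

variable {C : Type} {W : Set (ℕ → C)} {N : MemStruct C}

theorem stronglyMonotone_of_sufficesIn (h : SufficesIn N W (fun A => A.FinBranching)) :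
    StronglyMonotone N W := by
  intro w₁ w₂ hm
  by_contra hinc
  obtain ⟨x₁, hx₁, hx₁'⟩ := Set.not_subset.1 fun h => hinc (Or.inl h)
  obtain ⟨x₂, hx₂, hx₂'⟩ := Set.not_subset.1 fun h => hinc (Or.inr h)
  let x : Bool → ℕ → C := fun b => cond b x₁ x₂
  obtain ⟨σ, ⟨nxt, hσ⟩, hopt⟩ := h (gadget x) gadget_finBranching
  obtain ⟨j, hj⟩ := exists_choiceEdge_of_basedOn hσ w₁
  have hwin : ∀ {w : List C} (b : Bool), wcat w (x b) ∈ W →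
      nxt (.inl []) (N.updStar N.init w) = choiceEdge x j → wcat w (x j) ∈ W :=
    fun b hw hjw => hopt _ (gadget_winnable _ b hw) _ (gadgetPlay_playFrom _ j)
      (gadget_consistent_of_basedOn hσ hjw)
  cases j
  · exact hx₂' (hwin true hx₁ hj)
  · exact hx₁' (hwin false hx₂ (hm ▸ hj))

end Necessity

/-- characterization for general safety objectives in finitely
branching arenas: `N` suffices to play optimally for `W` in all finitely branching
arenas iff `W` is `N`-strongly-monotone. -/
theorem safety_characterization_finBranching {C : Type} [Nonempty C]
    (W : Set (ℕ → C))
    (hsafe : ∃ A : Set (List C), W = SafeObj A)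
    (N : MemStruct C) :
    SufficesIn N W (fun A => A.FinBranching) ↔ StronglyMonotone N W := by
  obtain ⟨B, rfl⟩ := hsafe
  exact ⟨stronglyMonotone_of_sufficesIn, sufficesIn_finBranching_of_stronglyMonotone⟩

end RegularMemory
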